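/- Let Q be a left quasigroup and α, β congruences of Q such that C(α,β;0_Q) holds. Then the commutator subgroup [Dis_α, Dis_β] is trivial, and the pointwise stabilizers satisfy (Dis_β)_x = (Dis_β)_y whenever x α y. -/

import Mathlib

namespace PaperLQ

/-- A left quasigroup `(Q, ⬝, \)`: `x ⬝ (x \ y) = y = x \ (x ⬝ y)`. -/
structure LeftQuasigroup (Q : Type*) where
  mul : Q → Q → Q
  ldiv : Q → Q → Q
  mul_ldiv : ∀ x y, mul x (ldiv x y) = y
  ldiv_mul : ∀ x y, ldiv x (mul x y) = y

namespace LeftQuasigroup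

variable {Q : Type*}

/-- The left translation `L_x : y ↦ x ⬝ y`, as a permutation of `Q`. -/
def L (S : LeftQuasigroup Q) (x : Q) : Equiv.Perm Q where
  toFun := S.mul x
  invFun := S.ldiv x
  left_inv := S.ldiv_mul x
  right_inv := S.mul_ldiv x

/-- The left multiplication group `LMlt(Q) = ⟨L_x : x ∈ Q⟩`. -/
def LMlt (S : LeftQuasigroup Q) : Subgroup (Equiv.Perm Q) :=
  Subgroup.closure (Set.range S.L)

/-- The displacement group `Dis(Q) = ⟨L_x L_y⁻¹ : x, y ∈ Q⟩`. -/
def Dis (S : LeftQuasigroup Q) : Subgroup (Equiv.Perm Q) :=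
  Subgroup.closure {g : Equiv.Perm Q | ∃ x y : Q, g = S.L x * (S.L y)⁻¹}

/-- The orbit equivalence `O_N` of a subgroup `N`: `x O_N y` iff `x = h y` for some `h ∈ N`. -/
def orbRel (N : Subgroup (Equiv.Perm Q)) : Setoid Q where
  r x y := ∃ h ∈ N, x = h y
  iseqv := by
    constructor
    · exact fun x => ⟨1, N.one_mem, rfl⟩
    · rintro x y ⟨h, hh, rfl⟩
      exact ⟨h⁻¹, N.inv_mem hh, (Equiv.symm_apply_apply h y).symm⟩
    · rintro x y z ⟨h, hh, rfl⟩ ⟨k, hk, rfl⟩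
      exact ⟨h * k, N.mul_mem hh hk, (Equiv.Perm.mul_apply h k z).symm⟩

/-- The equivalence `c_N`: `x c_N y` iff `L_x L_y⁻¹ ∈ N`. -/
def cRel (S : LeftQuasigroup Q) (N : Subgroup (Equiv.Perm Q)) : Setoid Q where
  r x y := S.L x * (S.L y)⁻¹ ∈ N
  iseqv := by
    constructor
    · intro x; simpa using N.one_mem
    · intro x y h; simpa [mul_inv_rev] using N.inv_mem h
    · intro x y z h h'; simpa [mul_assoc] using N.mul_mem h h'

/-- The Cayley kernel `λ_Q`: `x λ_Q y` iff `L_x = L_y`. -/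
def cayley (S : LeftQuasigroup Q) : Setoid Q where
  r x y := S.L x = S.L y
  iseqv := ⟨fun _ => rfl, Eq.symm, Eq.trans⟩

/-- `α` is a congruence of the left quasigroup. -/
def IsCongruence (S : LeftQuasigroup Q) (α : Setoid Q) : Prop :=
  ∀ ⦃x y z t : Q⦄, α.r x z → α.r y t →
    α.r (S.mul x y) (S.mul z t) ∧ α.r (S.ldiv x y) (S.ldiv z t)

/-- The relative displacement group `Dis_α = ⟨h L_x L_y⁻¹ h⁻¹ : x α y, h ∈ LMlt(Q)⟩`. -/
def disRel (S : LeftQuasigroup Q) (α : Setoid Q) : Subgroup (Equiv.Perm Q) :=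
  Subgroup.closure
    {g : Equiv.Perm Q | ∃ x y h, α.r x y ∧ h ∈ S.LMlt ∧ g = h * (S.L x * (S.L y)⁻¹) * h⁻¹}

/-- The subgroup of permutations moving every point inside its `α`-class. -/
def apprSub (α : Setoid Q) : Subgroup (Equiv.Perm Q) where
  carrier := {h : Equiv.Perm Q | ∀ x : Q, α.r (h x) x}
  one_mem' := fun x => by
    simpa using α.iseqv.refl x
  mul_mem' := fun {a b} ha hb x => by
    rw [Equiv.Perm.mul_apply]
    exact α.iseqv.trans (ha (b x)) (hb x)
  inv_mem' := fun {a} ha x => by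
    have h := ha (a⁻¹ x)
    rw [Equiv.Perm.inv_def, Equiv.apply_symm_apply] at h
    exact α.iseqv.symm h

/-- The group `Dis^α = {h ∈ Dis(Q) : h(x) α x for all x}`. -/
def disCo (S : LeftQuasigroup Q) (α : Setoid Q) : Subgroup (Equiv.Perm Q) :=
  S.Dis ⊓ apprSub α

/-- `N ∈ Norm'(Q)`: a normal subgroup of `LMlt(Q)` with `N ≤ Dis(Q)` and `O_N ≤ c_N`. -/
def MemNorm' (S : LeftQuasigroup Q) (N : Subgroup (Equiv.Perm Q)) : Prop :=
  N ≤ S.Dis ∧ (∀ h ∈ S.LMlt, ∀ n ∈ N, h * n * h⁻¹ ∈ N) ∧ orbRel N ≤ S.cRel N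

/-- The quotient left quasigroup `Q/α` for a congruence `α`. -/
def quot (S : LeftQuasigroup Q) (α : Setoid Q) (hα : S.IsCongruence α) :
    LeftQuasigroup (Quotient α) where
  mul := Quotient.lift₂ (fun x y => Quotient.mk α (S.mul x y))
    (fun _ _ _ _ h h' => Quotient.sound (hα h h').1)
  ldiv := Quotient.lift₂ (fun x y => Quotient.mk α (S.ldiv x y))
    (fun _ _ _ _ h h' => Quotient.sound (hα h h').2)
  mul_ldiv := fun a b => Quotient.inductionOn₂ a b fun x y => by
    show Quotient.mk α (S.mul x (S.ldiv x y)) = Quotient.mk α y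
    rw [S.mul_ldiv]
  ldiv_mul := fun a b => Quotient.inductionOn₂ a b fun x y => by
    show Quotient.mk α (S.ldiv x (S.mul x y)) = Quotient.mk α y
    rw [S.ldiv_mul]

/-- The image `π_α(N)` of a subgroup `N ≤ LMlt(Q)` in `Sym(Q/α)`: the permutations of
`Q/α` induced by some element of `N`. -/
def pushSub (α : Setoid Q) (N : Subgroup (Equiv.Perm Q)) :
    Subgroup (Equiv.Perm (Quotient α)) where
  carrier := {g | ∃ h ∈ N, ∀ x : Q, g (Quotient.mk α x) = Quotient.mk α (h x)}
  one_mem' := ⟨1, N.one_mem, fun x => rfl⟩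
  mul_mem' := fun {g₁ g₂} h₁ h₂ => by
    obtain ⟨k₁, hk₁, e₁⟩ := h₁
    obtain ⟨k₂, hk₂, e₂⟩ := h₂
    exact ⟨k₁ * k₂, N.mul_mem hk₁ hk₂, fun x => by
      rw [Equiv.Perm.mul_apply, Equiv.Perm.mul_apply, e₂ x, e₁ (k₂ x)]⟩
  inv_mem' := fun {g} h => by
    obtain ⟨k, hk, e⟩ := h
    refine ⟨k⁻¹, N.inv_mem hk, fun x => ?_⟩
    have h' := e (k⁻¹ x)
    rw [Equiv.Perm.inv_def, Equiv.apply_symm_apply] at h'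
    rw [← h', Equiv.Perm.inv_def, Equiv.symm_apply_apply]
    rfl

/-- `Q` is faithful if the Cayley kernel is trivial. -/
def Faithful (S : LeftQuasigroup Q) : Prop := S.cayley = ⊥

/-- `Q` is sharp: whenever `α ≤ β` are congruences with `β/α ≤ λ_{Q/α}`, then `α = β`. -/
def Sharp (S : LeftQuasigroup Q) : Prop :=
  ∀ (α β : Setoid Q) (hα : S.IsCongruence α), S.IsCongruence β → α ≤ β →
    (∀ x y : Q, β.r x y →
      (S.quot α hα).L (Quotient.mk α x) = (S.quot α hα).L (Quotient.mk α y)) →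
    α = β

/-- `Q` has congruences determined by orbits: `Dis^* : Con(Q) → Norm'(Q)` and
`O_* : Norm'(Q) → Con(Q)` are mutually inverse isomorphisms. -/
def CDOs (S : LeftQuasigroup Q) : Prop :=
  (∀ α : Setoid Q, S.IsCongruence α → orbRel (S.disCo α) = α) ∧
  (∀ N : Subgroup (Equiv.Perm Q), S.MemNorm' N → S.disCo (orbRel N) = N)

/-- `Q` has congruences determined by subgroups: `Dis_* : Con(Q) → Norm'(Q)` and
`c_* : Norm'(Q) → Con(Q)` are mutually inverse isomorphisms. -/
def CDSg (S : LeftQuasigroup Q) : Prop :=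
  (∀ α : Setoid Q, S.IsCongruence α → S.cRel (S.disRel α) = α) ∧
  (∀ N : Subgroup (Equiv.Perm Q), S.MemNorm' N → S.disRel (S.cRel N) = N)

/-- `Q` is connected: `LMlt(Q)` acts transitively. -/
def Connected (S : LeftQuasigroup Q) : Prop :=
  ∀ x y : Q, ∃ h ∈ S.LMlt, x = h y

/-- The subalgebra structure on a subset closed under `⬝` and `\`. -/
def sub (S : LeftQuasigroup Q) (T : Set Q)
    (hm : ∀ ⦃x⦄, x ∈ T → ∀ ⦃y⦄, y ∈ T → S.mul x y ∈ T)
    (hd : ∀ ⦃x⦄, x ∈ T → ∀ ⦃y⦄, y ∈ T → S.ldiv x y ∈ T) : LeftQuasigroup T where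
  mul a b := ⟨S.mul a b, hm a.2 b.2⟩
  ldiv a b := ⟨S.ldiv a b, hd a.2 b.2⟩
  mul_ldiv a b := Subtype.ext (S.mul_ldiv a b)
  ldiv_mul a b := Subtype.ext (S.ldiv_mul a b)

/-- `Q` is superconnected: every subalgebra is connected. -/
def Superconnected (S : LeftQuasigroup Q) : Prop :=
  ∀ (T : Set Q) (hm : ∀ ⦃x⦄, x ∈ T → ∀ ⦃y⦄, y ∈ T → S.mul x y ∈ T)
    (hd : ∀ ⦃x⦄, x ∈ T → ∀ ⦃y⦄, y ∈ T → S.ldiv x y ∈ T),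
    (S.sub T hm hd).Connected

/-- `Q` is idempotent: `x ⬝ x = x`. -/
def Idempotent (S : LeftQuasigroup Q) : Prop := ∀ x : Q, S.mul x x = x

/-- `Q` is latin: all right translations are bijective. -/
def Latin (S : LeftQuasigroup Q) : Prop :=
  ∀ x : Q, Function.Bijective fun y => S.mul y x

/-- `Q` is semiregular: the stabilizer of any point in `Dis(Q)` is trivial. -/
def Semiregular (S : LeftQuasigroup Q) : Prop :=
  ∀ x : Q, ∀ h ∈ S.Dis, h x = x → h = 1

/-- The term operations of a left quasigroup: the clone generated by `⬝` and `\`. -/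
inductive IsTermOp (S : LeftQuasigroup Q) : {n : ℕ} → ((Fin n → Q) → Q) → Prop
  | proj {n : ℕ} (i : Fin n) : IsTermOp S fun v => v i
  | mul {n : ℕ} {t s : (Fin n → Q) → Q} :
      IsTermOp S t → IsTermOp S s → IsTermOp S fun v => S.mul (t v) (s v)
  | ldiv {n : ℕ} {t s : (Fin n → Q) → Q} :
      IsTermOp S t → IsTermOp S s → IsTermOp S fun v => S.ldiv (t v) (s v)

/-- The centrality relation `C(α, β; δ)` of commutator theory. -/
def Centralizes (S : LeftQuasigroup Q) (α β δ : Setoid Q) : Prop :=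
  ∀ (n : ℕ) (t : (Fin (n + 1) → Q) → Q), S.IsTermOp t →
    ∀ x y : Q, α.r x y → ∀ z u : Fin n → Q, (∀ i, β.r (z i) (u i)) →
      δ.r (t (Fin.cons x z)) (t (Fin.cons x u)) →
      δ.r (t (Fin.cons y z)) (t (Fin.cons y u))

/-- The center `ζ_Q`: the largest central congruence. -/
def center (S : LeftQuasigroup Q) : Setoid Q :=
  sSup {β : Setoid Q | S.IsCongruence β ∧ S.Centralizes β ⊤ ⊥}

/-- The upper central series: `ζ_0 = 0_Q` and `ζ_{n+1}/ζ_n = ζ_{Q/ζ_n}`. -/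
def zeta (S : LeftQuasigroup Q) : ℕ → Setoid Q
  | 0 => ⊥
  | n + 1 =>
      sSup {β : Setoid Q | S.IsCongruence β ∧ S.zeta n ≤ β ∧ S.Centralizes β ⊤ (S.zeta n)}

/-- `Q` is nilpotent: the upper central series reaches `1_Q`. -/
def Nilpotent (S : LeftQuasigroup Q) : Prop := ∃ n : ℕ, S.zeta n = ⊤

/-- The variety generated by `Q` has a Malt'sev term. -/
def Maltsev (S : LeftQuasigroup Q) : Prop :=
  ∃ m : Q → Q → Q → Q,
    S.IsTermOp (n := 3) (fun v => m (v 0) (v 1) (v 2)) ∧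
    ∀ x y : Q, m x y y = x ∧ m y y x = x

/-- The central extension `E = Aff(Q, A, g, f, θ)` of `Q` by an abelian group `A`. -/
def affExt (S : LeftQuasigroup Q) (A : Type*) [AddCommGroup A]
    (g : A →+ A) (f : AddAut A) (θ : Q → Q → A) : LeftQuasigroup (Q × A) where
  mul p q := (S.mul p.1 q.1, g p.2 + f q.2 + θ p.1 q.1)
  ldiv p q := (S.ldiv p.1 q.1, f.symm (q.2 - g p.2 - θ p.1 (S.ldiv p.1 q.1)))
  mul_ldiv := by
    rintro ⟨x, a⟩ ⟨y, b⟩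
    dsimp only
    rw [S.mul_ldiv, AddEquiv.apply_symm_apply]
    refine Prod.ext rfl ?_
    dsimp only
    abel
  ldiv_mul := by
    rintro ⟨x, a⟩ ⟨y, b⟩
    dsimp only
    rw [S.ldiv_mul]
    refine Prod.ext rfl ?_
    dsimp only
    have h : g a + f b + θ x y - g a - θ x y = f b := by abel
    rw [h, AddEquiv.symm_apply_apply]

/-- The affine left quasigroup `Aff(A, g, f, c)`: `a ⬝ b = g(a) + f(b) + c`. -/
def affine {A : Type*} [AddCommGroup A] (g : A →+ A) (f : AddAut A) (c : A) :
    LeftQuasigroup A where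
  mul a b := g a + f b + c
  ldiv a b := f.symm (b - g a - c)
  mul_ldiv := by
    intro a b
    rw [AddEquiv.apply_symm_apply]
    abel
  ldiv_mul := by
    intro a b
    have h : g a + f b + c - g a - c = f b := by abel
    rw [h, AddEquiv.symm_apply_apply]

/-- The relation `α_N` on `Q × A`: `(x,a) α_N (y,b)` iff `x = y` and `a - b ∈ N`. -/
def prodCongr (Q : Type*) {A : Type*} [AddCommGroup A] (N : AddSubgroup A) :
    Setoid (Q × A) where
  r p q := p.1 = q.1 ∧ p.2 - q.2 ∈ N
  iseqv := by
    constructor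
    · exact fun p => ⟨rfl, by simpa using N.zero_mem⟩
    · rintro p q ⟨h1, h2⟩
      exact ⟨h1.symm, by simpa using N.neg_mem h2⟩
    · rintro p q r ⟨h1, h2⟩ ⟨h1', h2'⟩
      exact ⟨h1.trans h1', by simpa [sub_add_sub_cancel] using N.add_mem h2 h2'⟩

/-!
Each `f ∈ Dis_β` is a unary polynomial `p(·, z̄)` whose twin `p(·, ū)`, for parameters `z̄ β ū`,
is the identity. So `C(α, β; 0_Q)` turns `f x = x` into `f y = y` whenever `x α y`, and, applied
to a polynomial built from `f`, shows that `L_a L_b⁻¹` commutes with `Dis_β` whenever `a α b`.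
As `Dis_β` is normalized by `LMlt(Q)`, the generators of `Dis_α` then centralize `Dis_β`.
-/

variable {S : LeftQuasigroup Q} {α β : Setoid Q}

lemma IsTermOp.comp_reindex {n m : ℕ} {t : (Fin n → Q) → Q} (ht : S.IsTermOp t)
    (σ : Fin n → Fin m) : S.IsTermOp fun v => t (v ∘ σ) := by
  induction ht with
  | proj i => exact .proj (σ i)
  | mul _ _ ih₁ ih₂ => exact .mul ih₁ ih₂
  | ldiv _ _ ih₁ ih₂ => exact .ldiv ih₁ ih₂

variable (S β) in
/-- The pairs `t(·, z̄)`, `t(·, ū)` with `z̄ β ū` that `C(α, β; δ)` quantifies over. -/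
def IsTermPair (φ ψ : Q → Q) : Prop :=
  ∃ (n : ℕ) (t : (Fin (n + 1) → Q) → Q) (z u : Fin n → Q), S.IsTermOp t ∧
    (∀ i, β.r (z i) (u i)) ∧ (∀ x, φ x = t (Fin.cons x z)) ∧ ∀ x, ψ x = t (Fin.cons x u)

namespace IsTermPair

lemma var : S.IsTermPair β id id :=
  ⟨0, fun v => v 0, Fin.elim0, Fin.elim0, .proj 0, fun i => i.elim0, fun _ => rfl, fun _ => rfl⟩

lemma const {c d : Q} (hcd : β.r c d) : S.IsTermPair β (fun _ => c) (fun _ => d) :=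
  ⟨1, fun v => v 1, ![c], ![d], .proj 1, fun i => by fin_cases i; exact hcd,
    fun _ => rfl, fun _ => rfl⟩

/-- Two term pairs can be written over the concatenation of their parameter tuples, so any
basic operation applied to them is again a term pair. -/
lemma binop {op : Q → Q → Q}
    (hop : ∀ {n : ℕ} {t s : (Fin n → Q) → Q}, S.IsTermOp t → S.IsTermOp s →
      S.IsTermOp fun v => op (t v) (s v))
    {φ₁ ψ₁ φ₂ ψ₂ : Q → Q} (h₁ : S.IsTermPair β φ₁ ψ₁) (h₂ : S.IsTermPair β φ₂ ψ₂) :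
    S.IsTermPair β (fun x => op (φ₁ x) (φ₂ x)) (fun x => op (ψ₁ x) (ψ₂ x)) := by
  obtain ⟨n₁, t₁, z₁, u₁, ht₁, hzu₁, hφ₁, hψ₁⟩ := h₁
  obtain ⟨n₂, t₂, z₂, u₂, ht₂, hzu₂, hφ₂, hψ₂⟩ := h₂
  let σ₁ : Fin (n₁ + 1) → Fin (n₁ + n₂ + 1) := Fin.cons 0 fun i => (Fin.castAdd n₂ i).succ
  let σ₂ : Fin (n₂ + 1) → Fin (n₁ + n₂ + 1) := Fin.cons 0 fun i => (Fin.natAdd n₁ i).succ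
  have hσ₁ (x : Q) (z : Fin n₁ → Q) (z' : Fin n₂ → Q) :
      (Fin.cons x (Fin.append z z') : Fin (n₁ + n₂ + 1) → Q) ∘ σ₁ = Fin.cons x z := by
    funext i; cases i using Fin.cases <;> simp [σ₁]
  have hσ₂ (x : Q) (z : Fin n₁ → Q) (z' : Fin n₂ → Q) :
      (Fin.cons x (Fin.append z z') : Fin (n₁ + n₂ + 1) → Q) ∘ σ₂ = Fin.cons x z' := by
    funext i; cases i using Fin.cases <;> simp [σ₂]
  refine ⟨n₁ + n₂, fun v => op (t₁ (v ∘ σ₁)) (t₂ (v ∘ σ₂)), Fin.append z₁ z₂,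
    Fin.append u₁ u₂, hop (ht₁.comp_reindex σ₁) (ht₂.comp_reindex σ₂), fun i => ?_,
    fun x => by simp only [hσ₁, hσ₂, hφ₁, hφ₂], fun x => by simp only [hσ₁, hσ₂, hψ₁, hψ₂]⟩
  refine Fin.addCases (fun j => ?_) (fun j => ?_) i
  · simpa only [Fin.append_left] using hzu₁ j
  · simpa only [Fin.append_right] using hzu₂ j

end IsTermPair

lemma Centralizes.eq_of_isTermPair (hc : S.Centralizes α β ⊥) {φ ψ : Q → Q}
    (hφψ : S.IsTermPair β φ ψ) {x y : Q} (hxy : α.r x y) (hx : φ x = ψ x) : φ y = ψ y := by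
  obtain ⟨n, t, z, u, ht, hzu, hφ, hψ⟩ := hφψ
  rw [hφ, hψ] at hx ⊢
  exact hc n t ht x y hxy z u hzu hx

variable (S β) in
/-- An inductive presentation of term pairs, for which composition and substitution of
constants are structural inductions. -/
inductive PolyPair : (Q → Q) → (Q → Q) → Prop
  | var : PolyPair id id
  | const {c d : Q} : β.r c d → PolyPair (fun _ => c) (fun _ => d)
  | mul {φ₁ ψ₁ φ₂ ψ₂ : Q → Q} : PolyPair φ₁ ψ₁ → PolyPair φ₂ ψ₂ →
      PolyPair (fun x => S.mul (φ₁ x) (φ₂ x)) (fun x => S.mul (ψ₁ x) (ψ₂ x))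
  | ldiv {φ₁ ψ₁ φ₂ ψ₂ : Q → Q} : PolyPair φ₁ ψ₁ → PolyPair φ₂ ψ₂ →
      PolyPair (fun x => S.ldiv (φ₁ x) (φ₂ x)) (fun x => S.ldiv (ψ₁ x) (ψ₂ x))

namespace PolyPair

lemma isTermPair {φ ψ : Q → Q} (h : S.PolyPair β φ ψ) : S.IsTermPair β φ ψ := by
  induction h with
  | var => exact .var
  | const hcd => exact .const hcd
  | mul _ _ ih₁ ih₂ => exact ih₁.binop (fun ht hs => .mul ht hs) ih₂
  | ldiv _ _ ih₁ ih₂ => exact ih₁.binop (fun ht hs => .ldiv ht hs) ih₂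

lemma symm {φ ψ : Q → Q} (h : S.PolyPair β φ ψ) : S.PolyPair β ψ φ := by
  induction h with
  | var => exact .var
  | const hcd => exact .const (β.iseqv.symm hcd)
  | mul _ _ ih₁ ih₂ => exact .mul ih₁ ih₂
  | ldiv _ _ ih₁ ih₂ => exact .ldiv ih₁ ih₂

lemma const_apply {φ ψ : Q → Q} (h : S.PolyPair β φ ψ) (w : Q) :
    S.PolyPair β (fun _ => φ w) (fun _ => ψ w) := by
  induction h with
  | var => exact .const (β.iseqv.refl w)
  | const hcd => exact .const hcd
  | mul _ _ ih₁ ih₂ => exact .mul ih₁ ih₂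
  | ldiv _ _ ih₁ ih₂ => exact .ldiv ih₁ ih₂

lemma comp {φ ψ φ' ψ' : Q → Q} (h : S.PolyPair β φ ψ) (h' : S.PolyPair β φ' ψ') :
    S.PolyPair β (φ ∘ φ') (ψ ∘ ψ') := by
  induction h with
  | var => exact h'
  | const hcd => exact .const hcd
  | mul _ _ ih₁ ih₂ => exact .mul ih₁ ih₂
  | ldiv _ _ ih₁ ih₂ => exact .ldiv ih₁ ih₂

end PolyPair

lemma Centralizes.eq_of_polyPair (hc : S.Centralizes α β ⊥) {φ ψ : Q → Q}
    (hφψ : S.PolyPair β φ ψ) {x y : Q} (hxy : α.r x y) (hx : φ x = ψ x) : φ y = ψ y :=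
  hc.eq_of_isTermPair hφψ.isTermPair hxy hx

lemma polyPair_of_mem_LMlt {h : Equiv.Perm Q} (hh : h ∈ S.LMlt) : S.PolyPair β h h := by
  induction hh using Subgroup.closure_induction'' with
  | mem _ hg =>
    obtain ⟨x, rfl⟩ := hg
    exact .mul (.const (β.iseqv.refl x)) .var
  | inv_mem _ hg =>
    obtain ⟨x, rfl⟩ := hg
    exact .ldiv (.const (β.iseqv.refl x)) .var
  | one => exact .var
  | mul _ _ _ _ ih₁ ih₂ => exact ih₁.comp ih₂

lemma PolyPair.conj {f h : Equiv.Perm Q} (hf : S.PolyPair β f id) (hh : h ∈ S.LMlt) :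
    S.PolyPair β ⇑(h * f * h⁻¹) id := by
  have hconj := (polyPair_of_mem_LMlt hh).comp (hf.comp (polyPair_of_mem_LMlt (inv_mem hh)))
  rwa [show (id : Q → Q) = h ∘ id ∘ ⇑h⁻¹ from funext fun w => (h.apply_symm_apply w).symm]

lemma polyPair_displacement {a b : Q} (hab : β.r a b) :
    S.PolyPair β ⇑(S.L a * (S.L b)⁻¹) id := by
  have h : S.PolyPair β (fun w => S.mul a (S.ldiv b w)) (fun w => S.mul b (S.ldiv b w)) :=
    .mul (.const hab) (.ldiv (.const (β.iseqv.refl b)) .var)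
  rwa [show (id : Q → Q) = fun w => S.mul b (S.ldiv b w) from
    funext fun w => (S.mul_ldiv b w).symm]

lemma polyPair_of_mem_disRel {f : Equiv.Perm Q} (hf : f ∈ S.disRel β) : S.PolyPair β f id := by
  induction hf using Subgroup.closure_induction'' with
  | mem _ hg =>
    obtain ⟨a, b, h, hab, hh, rfl⟩ := hg
    exact (polyPair_displacement hab).conj hh
  | inv_mem _ hg =>
    obtain ⟨a, b, h, hab, hh, rfl⟩ := hg
    have hinv : (h * (S.L a * (S.L b)⁻¹) * h⁻¹)⁻¹ = h * (S.L b * (S.L a)⁻¹) * h⁻¹ := by group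
    rw [hinv]
    exact (polyPair_displacement (β.iseqv.symm hab)).conj hh
  | one => exact .var
  | mul _ _ _ _ ih₁ ih₂ => exact ih₁.comp ih₂

/-- Centrality applied to the polynomial `v ↦ f(v · (b \ w))`, paired with `v ↦ v · (b \ f w)`,
which agree at `v = b`. -/
lemma Centralizes.commute_displacement (hc : S.Centralizes α β ⊥) {a b : Q} (hab : α.r a b)
    {f : Equiv.Perm Q} (hf : S.PolyPair β f id) : Commute (S.L a * (S.L b)⁻¹) f := by
  refine Equiv.ext fun w => Eq.symm ?_
  have hpair : S.PolyPair β (fun v => f (S.mul v (S.ldiv b w)))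
      (fun v => S.mul v (S.ldiv b (f w))) :=
    hf.comp (.mul .var (.ldiv (.const (β.iseqv.refl b)) (hf.symm.const_apply w)))
  exact hc.eq_of_polyPair hpair (α.iseqv.symm hab) (by simp only [S.mul_ldiv])

lemma Centralizes.disRel_le_centralizer (hc : S.Centralizes α β ⊥) :
    S.disRel α ≤ Subgroup.centralizer (S.disRel β) := by
  rw [disRel, Subgroup.closure_le]
  rintro _ ⟨a, b, h, hab, hh, rfl⟩ f hf
  have hconj : S.PolyPair β ⇑(h⁻¹ * f * h⁻¹⁻¹) id :=
    (polyPair_of_mem_disRel hf).conj (inv_mem hh)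
  rw [inv_inv] at hconj
  have hcomm := (hc.commute_displacement hab hconj).conj h
  simp only [mul_assoc, mul_inv_cancel_left, mul_inv_cancel, mul_one] at hcomm
  exact hcomm.eq.symm

lemma Centralizes.apply_eq_self_iff (hc : S.Centralizes α β ⊥) {x y : Q} (hxy : α.r x y)
    {f : Equiv.Perm Q} (hf : f ∈ S.disRel β) : f x = x ↔ f y = y :=
  have hpair := polyPair_of_mem_disRel hf
  ⟨hc.eq_of_polyPair hpair hxy, hc.eq_of_polyPair hpair (α.iseqv.symm hxy)⟩

theorem statement_19_general {Q : Type*} (S : LeftQuasigroup Q) (α β : Setoid Q)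
    (hc : S.Centralizes α β ⊥) :
    ⁅S.disRel α, S.disRel β⁆ = (⊥ : Subgroup (Equiv.Perm Q)) ∧
    ∀ x y : Q, α.r x y → ∀ h ∈ S.disRel β, (h x = x ↔ h y = y) :=
  ⟨Subgroup.commutator_eq_bot_iff_le_centralizer.mpr hc.disRel_le_centralizer,
    fun _ _ hxy _ hf => hc.apply_eq_self_iff hxy hf⟩

/-- If `C(α,β;0_Q)` holds, then `[Dis_α, Dis_β] = 1` and `(Dis_β)_x = (Dis_β)_y`
whenever `x α y`. -/
theorem statement_19 {Q : Type*} (S : LeftQuasigroup Q) (α β : Setoid Q)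
    (hα : S.IsCongruence α) (hβ : S.IsCongruence β)
    (hc : S.Centralizes α β ⊥) :
    ⁅S.disRel α, S.disRel β⁆ = (⊥ : Subgroup (Equiv.Perm Q)) ∧
    ∀ x y : Q, α.r x y → ∀ h ∈ S.disRel β, (h x = x ↔ h y = y) :=
  statement_19_general S α β hc

end LeftQuasigroup

end PaperLQ
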